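/- (Asymptotic equivalence.) Let Δ = (0,c]. Suppose F ∈ 𝒮_Δ ∩ 𝒟_Δ, G ∈ ℒ_Δ, and G(x+Δ) ≍ F(x+Δ) as x → ∞ (i.e. the ratio is bounded above and below by positive constants). Then G ∈ 𝒮_Δ. -/

import Mathlib

open MeasureTheory Filter Set Topology

/-- Mass of the interval `(x, x+c]` under `μ`, i.e. `F(x+Δ)` for `Δ = (0,c]`. -/
noncomputable def tailI (μ : Measure ℝ) (c x : ℝ) : ℝ := (μ (Ioc x (x + c))).toReal

/-- `F ∈ ℒ_Δ`: `x ↦ F(x+Δ)` is eventually positive and long-tailed. -/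
def LongDelta (μ : Measure ℝ) (c : ℝ) : Prop :=
  (∀ᶠ x in atTop, 0 < tailI μ c x) ∧
  ∀ y : ℝ, 0 < y → Tendsto (fun x => tailI μ c (x + y) / tailI μ c x) atTop (𝓝 1)

/-- `F ∈ 𝒮_Δ`: Δ-subexponentiality. -/
def SDelta (μ : Measure ℝ) (c : ℝ) : Prop :=
  LongDelta μ c ∧
  Tendsto (fun x => tailI (μ.conv μ) c x / tailI μ c x) atTop (𝓝 2)

/-- almost decreasing function -/
def AlmostDec (α : ℝ → ℝ) : Prop :=
  ∃ x₀ > (0:ℝ), ∃ K > (0:ℝ), ∀ x > x₀, ∀ y > (0:ℝ), α (x + y) ≤ K * α x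

/-- `F ∈ 𝒟_Δ` -/
def DDelta (μ : Measure ℝ) (c : ℝ) : Prop := AlmostDec (tailI μ c)

/-- asymptotic to a non-increasing function (a.n.i.): locally bounded and positive on
`[x₀,∞)` and `sup_{t ≥ x} α(t) ∼ α(x)`, `inf_{x₀ ≤ t ≤ x} α(t) ∼ α(x)`. -/
def ANI (α : ℝ → ℝ) : Prop :=
  ∃ x₀ > (0:ℝ), (∀ x ∈ Ici x₀, 0 < α x) ∧ (∀ x : ℝ, BddAbove (α '' Icc x₀ x)) ∧
    Tendsto (fun x => sSup (α '' Ici x) / α x) atTop (𝓝 1) ∧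
    Tendsto (fun x => sInf (α '' Icc x₀ x) / α x) atTop (𝓝 1)

/-- `F ∈ 𝒜_Δ` -/
def ADelta (μ : Measure ℝ) (c : ℝ) : Prop := ANI (tailI μ c)

/-- `nconv μ n` is the `n`-fold convolution of `μ`, with `nconv μ 0 = δ₀`. -/
noncomputable def nconv (μ : Measure ℝ) : ℕ → Measure ℝ
  | 0 => Measure.dirac 0
  | n + 1 => (nconv μ n).conv μ

/-- `f ∈ ℒ` for densities. -/
def LongFun (f : ℝ → ℝ) : Prop :=
  (∀ᶠ x in atTop, 0 < f x) ∧
  ∀ y : ℝ, Tendsto (fun x => f (x + y) / f x) atTop (𝓝 1)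

/-- convolution of density functions -/
noncomputable def convFun (f g : ℝ → ℝ) (x : ℝ) : ℝ := ∫ y, f (x - y) * g y

/-- `f ∈ 𝒮`: subexponential density on ℝ. -/
def SubexpFun (f : ℝ → ℝ) : Prop :=
  LongFun f ∧ Tendsto (fun x => convFun f f x / f x) atTop (𝓝 2)

/-- `nconvFun f n` is the `(n+1)`-fold convolution of the density `f`. -/
noncomputable def nconvFun (f : ℝ → ℝ) : ℕ → ℝ → ℝ
  | 0 => f
  | n + 1 => convFun (nconvFun f n) f

lemma tailI_nonneg (μ : Measure ℝ) (c x : ℝ) : 0 ≤ tailI μ c x := ENNReal.toReal_nonneg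

lemma tailI_le_one (μ : Measure ℝ) [IsProbabilityMeasure μ] (c x : ℝ) : tailI μ c x ≤ 1 := by
  have h : μ (Ioc x (x+c)) ≤ 1 := (measure_mono (subset_univ _)).trans_eq measure_univ
  calc tailI μ c x ≤ (1 : ENNReal).toReal := ENNReal.toReal_mono ENNReal.one_ne_top h
  _ = 1 := by simp

lemma tailI_key (μ : Measure ℝ) [IsFiniteMeasure μ] {c : ℝ} (hc : 0 ≤ c) (x : ℝ) :
    tailI μ c x = (μ (Iic (x+c))).toReal - (μ (Iic x)).toReal := by
  have hd : Iic x ∪ Ioc x (x+c) = Iic (x+c) := Iic_union_Ioc_eq_Iic (by linarith)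
  have := measure_union (μ := μ) (s₁ := Iic x) (s₂ := Ioc x (x+c)) (Iic_disjoint_Ioc (le_refl x)) measurableSet_Ioc
  rw [hd] at this
  rw [tailI, this, ENNReal.toReal_add (measure_ne_top _ _) (measure_ne_top _ _)]
  ring

lemma tailI_measurable (μ : Measure ℝ) [IsFiniteMeasure μ] {c : ℝ} (hc : 0 ≤ c) :
    Measurable (tailI μ c) := by
  have h1 : Measurable fun x : ℝ => (μ (Iic x)).toReal :=
    (Monotone.measurable fun a b hab => ENNReal.toReal_mono (measure_ne_top _ _)
      (measure_mono (Iic_subset_Iic.2 hab)))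
  have : Measurable fun x : ℝ => (μ (Iic (x+c))).toReal := h1.comp (by fun_prop)
  simp only [funext fun x => tailI_key μ hc x]
  exact this.sub h1

lemma measE (μ : Measure ℝ) [IsFiniteMeasure μ] {c : ℝ} (hc : 0 ≤ c) :
    Measurable fun t => μ (Ioc t (t + c)) := by
  have : ∀ t, μ (Ioc t (t+c)) = ENNReal.ofReal (tailI μ c t) := fun t => by
    rw [tailI, ENNReal.ofReal_toReal (measure_ne_top _ _)]
  simp only [funext this]
  exact ENNReal.measurable_ofReal.comp (tailI_measurable μ hc)

lemma conv_Ioc (μ ν : Measure ℝ) [SFinite μ] [SFinite ν] (a b : ℝ) :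
    (μ.conv ν) (Ioc a b) = ∫⁻ z, ν (Ioc (a - z) (b - z)) ∂μ := by
  rw [Measure.conv, Measure.map_apply measurable_add measurableSet_Ioc,
    Measure.prod_apply (measurable_add measurableSet_Ioc)]
  congr 1
  ext z
  congr 1
  ext y
  simp only [mem_preimage, mem_Ioc, mem_setOf_eq]
  constructor
  · rintro ⟨h1, h2⟩; exact ⟨by linarith, by linarith⟩
  · rintro ⟨h1, h2⟩; exact ⟨by linarith, by linarith⟩

lemma lem_shift (φ : ℝ → ℝ) (hpos : ∀ᶠ x in atTop, 0 < φ x)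
    (hL : ∀ y : ℝ, 0 < y → Tendsto (fun x => φ (x + y) / φ x) atTop (𝓝 1)) :
    ∀ y : ℝ, Tendsto (fun x => φ (x - y) / φ x) atTop (𝓝 1) := by
  intro y
  rcases lt_trichotomy y 0 with h | h | h
  · simpa [sub_eq_add_neg] using hL (-y) (by linarith)
  · subst h
    have h1 : ∀ᶠ x in atTop, (1:ℝ) = φ (x - 0) / φ x :=
      hpos.mono fun x hx => by simp [div_self hx.ne']
    exact tendsto_const_nhds.congr' h1
  · have hmap : Tendsto (fun x : ℝ => x - y) atTop atTop := by
      simpa [sub_eq_add_neg] using tendsto_atTop_add_const_right atTop (-y) tendsto_id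
    have h2 : Tendsto (fun x => φ x / φ (x - y)) atTop (𝓝 1) := by
      have := (hL y h).comp hmap
      simpa [Function.comp_def, sub_add_cancel] using this
    have h3 := h2.inv₀ one_ne_zero
    simp only [inv_div, inv_one] at h3
    exact h3

lemma lem_dct (ρ : Measure ℝ) [IsFiniteMeasure ρ] (φ : ℝ → ℝ) (hm : Measurable φ)
    (h0 : ∀ t, 0 ≤ φ t)
    (hshift : ∀ y : ℝ, Tendsto (fun x => φ (x - y) / φ x) atTop (𝓝 1))
    (x₁ K : ℝ) (hK : 1 ≤ K) (had : ∀ s, x₁ ≤ s → ∀ t, 0 ≤ t → φ (s + t) ≤ K * φ s)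
    (a b : ℝ) :
    Tendsto (fun x => (∫ y in Ioc a b, φ (x - y) ∂ρ) / φ x) atTop (𝓝 (ρ (Ioc a b)).toReal) := by
  have hmeas : ∀ x : ℝ, AEStronglyMeasurable (fun y => φ (x - y) / φ x) (ρ.restrict (Ioc a b)) :=
    fun x => ((hm.comp (measurable_const.sub measurable_id)).div_const _).aestronglyMeasurable
  have h_bound : ∀ᶠ x in atTop, ∀ᵐ y ∂ρ.restrict (Ioc a b), ‖φ (x - y) / φ x‖ ≤ 2 * K := by
    have h1 : ∀ᶠ x in atTop, φ (x - b) / φ x ≤ 2 := by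
      have : ∀ᶠ r in 𝓝 (1:ℝ), r ≤ 2 := eventually_le_nhds (by norm_num)
      exact (hshift b).eventually this
    filter_upwards [h1, eventually_ge_atTop (x₁ + b)] with x hx2 hxb
    refine (ae_restrict_mem measurableSet_Ioc).mono fun y hy => ?_
    rw [Real.norm_eq_abs, abs_of_nonneg (div_nonneg (h0 _) (h0 _))]
    rcases eq_or_lt_of_le (h0 x) with hx0 | hx0
    · rw [← hx0, div_zero]
      nlinarith
    · have hb1 : φ (x - y) ≤ K * φ (x - b) := by
        have := had (x - b) (by linarith) (b - y) (by linarith [hy.2])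
        simpa [show x - b + (b - y) = x - y by ring] using this
      have hb2 : φ (x - b) ≤ 2 * φ x := by
        rw [div_le_iff₀ hx0] at hx2; linarith
      rw [div_le_iff₀ hx0]
      nlinarith [h0 (x - y), h0 (x - b)]
  have h_lim : ∀ᵐ y ∂ρ.restrict (Ioc a b), Tendsto (fun x => φ (x - y) / φ x) atTop (𝓝 1) :=
    ae_of_all _ fun y => hshift y
  have key := tendsto_integral_filter_of_dominated_convergence (μ := ρ.restrict (Ioc a b))
      (F := fun x y => φ (x - y) / φ x) (f := fun _ => (1:ℝ)) (fun _ => 2 * K)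
      (Eventually.of_forall hmeas) h_bound (integrable_const _) h_lim
  simpa [integral_div, integral_const, Measure.restrict_apply_univ, measureReal_def] using key

lemma intg (μ ν : Measure ℝ) [IsProbabilityMeasure μ] [IsFiniteMeasure ν] {c : ℝ} (hc : 0 < c)
    (x : ℝ) (s : Set ℝ) : IntegrableOn (fun y => tailI μ c (x - y)) s ν := by
  have hm : Measurable fun y => tailI μ c (x - y) :=
    (tailI_measurable μ hc.le).comp (measurable_const.sub measurable_id)
  refine Integrable.mono' (integrable_const 1) hm.aestronglyMeasurable ?_
  refine ae_of_all _ fun y => ?_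
  rw [Real.norm_eq_abs, abs_of_nonneg (tailI_nonneg _ _ _)]
  exact tailI_le_one _ _ _

lemma hSmeas (x c : ℝ) :
    MeasurableSet {p : ℝ × ℝ | x < p.1 + p.2 ∧ p.1 + p.2 ≤ x + c} := by
  have h : {p : ℝ × ℝ | x < p.1 + p.2 ∧ p.1 + p.2 ≤ x + c}
      = (fun p : ℝ × ℝ => p.1 + p.2) ⁻¹' (Ioc x (x + c)) := rfl
  rw [h]
  exact (measurable_fst.add measurable_snd) measurableSet_Ioc

lemma slice12 (μ ν : Measure ℝ) [SFinite ν] (x c : ℝ) {s t : Set ℝ}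
    (hs : MeasurableSet s) (ht : MeasurableSet t) :
    (μ.prod ν) ({p : ℝ × ℝ | x < p.1 + p.2 ∧ p.1 + p.2 ≤ x + c} ∩ s ×ˢ t)
      = ∫⁻ z in s, ν (Ioc (x - z) (x + c - z) ∩ t) ∂μ := by
  rw [Measure.prod_apply ((hSmeas x c).inter (hs.prod ht)),
    ← lintegral_indicator hs]
  congr 1; ext z
  by_cases hz : z ∈ s
  · rw [indicator_of_mem hz]
    congr 1
    ext y
    simp only [mem_preimage, mem_inter_iff, mem_setOf_eq, mem_prod, mem_Ioc]
    constructor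
    · rintro ⟨⟨h1, h2⟩, _, hyt⟩; exact ⟨⟨by linarith, by linarith⟩, hyt⟩
    · rintro ⟨⟨h1, h2⟩, hyt⟩; exact ⟨⟨by linarith, by linarith⟩, hz, hyt⟩
  · rw [indicator_of_notMem hz]
    have h0 : (Prod.mk z ⁻¹' ({p : ℝ × ℝ | x < p.1 + p.2 ∧ p.1 + p.2 ≤ x + c} ∩ s ×ˢ t)) = ∅ := by
      ext y; simp [hz]
    rw [h0, measure_empty]

lemma slice2 (μ ν : Measure ℝ) [SFinite μ] [SFinite ν] (x c : ℝ) {t : Set ℝ}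
    (ht : MeasurableSet t) :
    (μ.prod ν) ({p : ℝ × ℝ | x < p.1 + p.2 ∧ p.1 + p.2 ≤ x + c} ∩ (univ : Set ℝ) ×ˢ t)
      = ∫⁻ y in t, μ (Ioc (x - y) (x + c - y)) ∂ν := by
  rw [Measure.prod_apply_symm ((hSmeas x c).inter (MeasurableSet.univ.prod ht)),
    ← lintegral_indicator ht]
  congr 1; ext y
  by_cases hy : y ∈ t
  · rw [indicator_of_mem hy]
    congr 1
    ext z
    simp only [mem_preimage, mem_inter_iff, mem_setOf_eq, mem_prod, mem_Ioc, mem_univ, true_and]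
    constructor
    · rintro ⟨⟨h1, h2⟩, _⟩; exact ⟨by linarith, by linarith⟩
    · rintro ⟨h1, h2⟩; exact ⟨⟨by linarith, by linarith⟩, hy⟩
  · rw [indicator_of_notMem hy]
    have h0 : ((fun z => (z, y)) ⁻¹' ({p : ℝ × ℝ | x < p.1 + p.2 ∧ p.1 + p.2 ≤ x + c}
        ∩ (univ : Set ℝ) ×ˢ t)) = ∅ := by
      ext z; simp [hy]
    rw [h0, measure_empty]

lemma lint_toReal (μ ν : Measure ℝ) [IsProbabilityMeasure μ] [IsFiniteMeasure ν] {c : ℝ}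
    (hc : 0 < c) (x : ℝ) (s : Set ℝ) :
    (∫⁻ y in s, μ (Ioc (x - y) (x + c - y)) ∂ν).toReal = ∫ y in s, tailI μ c (x - y) ∂ν := by
  have hshape : ∀ y : ℝ, Ioc (x - y) (x + c - y) = Ioc (x - y) ((x - y) + c) := by
    intro y; congr 1; ring
  simp only [hshape]
  rw [← integral_toReal]
  · rfl
  · exact ((measE μ hc.le).comp (measurable_const.sub measurable_id)).aemeasurable
  · exact ae_of_all _ fun y => measure_lt_top _ _

lemma decompG (G : Measure ℝ) [IsProbabilityMeasure G] {c : ℝ} (hc : 0 < c) (T x : ℝ)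
    (hx : 2 * T ≤ x) :
    tailI (G.conv G) c x = 2 * (∫ y in Iic T, tailI G c (x - y) ∂G)
      + ((G.prod G) ({p : ℝ × ℝ | x < p.1 + p.2 ∧ p.1 + p.2 ≤ x + c}
          ∩ Ioi T ×ˢ Ioi T)).toReal := by
  set S := {p : ℝ × ℝ | x < p.1 + p.2 ∧ p.1 + p.2 ≤ x + c} with hSdef
  set π := G.prod G with hπdef
  have hconv : tailI (G.conv G) c x = (π S).toReal := by
    rw [tailI, Measure.conv, Measure.map_apply measurable_add measurableSet_Ioc]
    rfl
  have hmA : MeasurableSet (S ∩ Iic T ×ˢ (univ : Set ℝ)) :=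
    (hSmeas x c).inter (measurableSet_Iic.prod MeasurableSet.univ)
  have hmB : MeasurableSet (S ∩ Ioi T ×ˢ Iic T) :=
    (hSmeas x c).inter (measurableSet_Ioi.prod measurableSet_Iic)
  have hmM : MeasurableSet (S ∩ Ioi T ×ˢ Ioi T) :=
    (hSmeas x c).inter (measurableSet_Ioi.prod measurableSet_Ioi)
  have hpart : S = (S ∩ Iic T ×ˢ (univ : Set ℝ)) ∪ ((S ∩ Ioi T ×ˢ Iic T) ∪ (S ∩ Ioi T ×ˢ Ioi T)) := by
    ext p
    simp only [mem_union, mem_inter_iff, mem_prod, mem_Iic, mem_Ioi, mem_univ, and_true]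
    constructor
    · intro h
      rcases le_or_gt p.1 T with h1 | h1
      · exact Or.inl ⟨h, h1⟩
      · rcases le_or_gt p.2 T with h2 | h2
        · exact Or.inr (Or.inl ⟨h, h1, h2⟩)
        · exact Or.inr (Or.inr ⟨h, h1, h2⟩)
    · rintro (⟨h, _⟩ | ⟨h, _⟩ | ⟨h, _⟩) <;> exact h
  have hd1 : Disjoint (S ∩ Iic T ×ˢ (univ : Set ℝ)) ((S ∩ Ioi T ×ˢ Iic T) ∪ (S ∩ Ioi T ×ˢ Ioi T)) := by
    rw [disjoint_left]
    rintro p ⟨_, hp1, _⟩ (⟨_, hq1, _⟩ | ⟨_, hq1, _⟩) <;> exact absurd (mem_Iic.1 hp1) (not_le.2 (mem_Ioi.1 hq1))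
  have hd2 : Disjoint (S ∩ Ioi T ×ˢ Iic T) (S ∩ Ioi T ×ˢ Ioi T) := by
    rw [disjoint_left]
    rintro p ⟨_, _, hp2⟩ ⟨_, _, hq2⟩
    exact absurd (mem_Iic.1 hp2) (not_le.2 (mem_Ioi.1 hq2))
  have hadd : π S = π (S ∩ Iic T ×ˢ (univ : Set ℝ))
      + (π (S ∩ Ioi T ×ˢ Iic T) + π (S ∩ Ioi T ×ˢ Ioi T)) := by
    conv_lhs => rw [hpart]
    rw [measure_union hd1 (hmB.union hmM), measure_union hd2 hmM]
  have hswap : π (S ∩ Ioi T ×ˢ Iic T) = π (S ∩ Iic T ×ˢ (univ : Set ℝ)) := by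
    have h1 : Prod.swap ⁻¹' (S ∩ Iic T ×ˢ Ioi T) = S ∩ Ioi T ×ˢ Iic T := by
      ext p
      simp only [mem_preimage, Prod.fst_swap, Prod.snd_swap, mem_inter_iff, mem_setOf_eq,
        mem_prod, mem_Iic, mem_Ioi, hSdef]
      constructor
      · rintro ⟨⟨a, b⟩, h2, h3⟩
        exact ⟨⟨by linarith, by linarith⟩, h3, h2⟩
      · rintro ⟨⟨a, b⟩, h2, h3⟩
        exact ⟨⟨by linarith, by linarith⟩, h3, h2⟩
    have h2 : S ∩ Iic T ×ˢ Ioi T = S ∩ Iic T ×ˢ (univ : Set ℝ) := by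
      ext p
      simp only [mem_inter_iff, mem_prod, mem_Iic, mem_Ioi, mem_univ, and_true, mem_setOf_eq, hSdef]
      constructor
      · rintro ⟨hpS, h1, _⟩
        exact ⟨hpS, h1⟩
      · rintro ⟨hpS, h1⟩
        exact ⟨hpS, h1, by linarith [hpS.1]⟩
    calc π (S ∩ Ioi T ×ˢ Iic T) = π (Prod.swap ⁻¹' (S ∩ Iic T ×ˢ Ioi T)) := by rw [h1]
      _ = (Measure.map Prod.swap π) (S ∩ Iic T ×ˢ Ioi T) := by
          rw [Measure.map_apply measurable_swap ((hSmeas x c).inter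
            (measurableSet_Iic.prod measurableSet_Ioi))]
      _ = π (S ∩ Iic T ×ˢ Ioi T) := by rw [hπdef, Measure.prod_swap]
      _ = π (S ∩ Iic T ×ˢ (univ : Set ℝ)) := by rw [h2]
  have hAval : (π (S ∩ Iic T ×ˢ (univ : Set ℝ))).toReal = ∫ y in Iic T, tailI G c (x - y) ∂G := by
    have h := slice12 G G x c (s := Iic T) (t := univ) measurableSet_Iic MeasurableSet.univ
    simp only [inter_univ] at h
    rw [hπdef, h, lint_toReal G G hc x _]
  rw [hconv, hadd, hswap, ENNReal.toReal_add (measure_ne_top _ _)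
    (ENNReal.add_ne_top.2 ⟨measure_ne_top _ _, measure_ne_top _ _⟩),
    ENNReal.toReal_add (measure_ne_top _ _) (measure_ne_top _ _), hAval]
  ring

lemma Mbound (G : Measure ℝ) [IsProbabilityMeasure G] {c : ℝ} (hc : 0 < c) (T x : ℝ) :
    ((G.prod G) ({p : ℝ × ℝ | x < p.1 + p.2 ∧ p.1 + p.2 ≤ x + c} ∩ Ioi T ×ˢ Ioi T)).toReal
      ≤ ∫ y in Ioc T (x + c - T), tailI G c (x - y) ∂G := by
  rw [slice12 G G x c (s := Ioi T) (t := Ioi T) measurableSet_Ioi measurableSet_Ioi, ← lint_toReal G G hc x _]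
  have hle : ∫⁻ z in Ioi T, G (Ioc (x - z) (x + c - z) ∩ Ioi T) ∂G
      ≤ ∫⁻ z in Ioc T (x + c - T), G (Ioc (x - z) (x + c - z)) ∂G := by
    rw [← lintegral_indicator measurableSet_Ioi, ← lintegral_indicator measurableSet_Ioc]
    apply lintegral_mono
    intro z
    by_cases h1 : z ∈ Ioi T
    · rw [indicator_of_mem h1]
      by_cases h2 : z ≤ x + c - T
      · rw [indicator_of_mem (show z ∈ Ioc T (x + c - T) from ⟨h1, h2⟩)]
        exact measure_mono inter_subset_left
      · have he : Ioc (x - z) (x + c - z) ∩ Ioi T = ∅ := by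
          ext w
          simp only [mem_inter_iff, mem_Ioc, mem_Ioi, mem_empty_iff_false, iff_false, not_and]
          intro hw1
          push_neg at h2
          intro hw2
          linarith [hw1.2]
        rw [he, measure_empty]
        exact zero_le
    · rw [indicator_of_notMem h1]
      exact zero_le
  have hfin : ∫⁻ z in Ioc T (x + c - T), G (Ioc (x - z) (x + c - z)) ∂G ≠ ⊤ := by
    have h1 : ∫⁻ z in Ioc T (x + c - T), G (Ioc (x - z) (x + c - z)) ∂G
        ≤ ∫⁻ _ in Ioc T (x + c - T), 1 ∂G := lintegral_mono fun z => prob_le_one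
    refine ne_of_lt (lt_of_le_of_lt h1 ?_)
    rw [setLIntegral_one]
    exact lt_of_le_of_lt prob_le_one ENNReal.one_lt_top
  exact ENNReal.toReal_mono hfin hle

lemma lfin {α : Type*} [MeasurableSpace α] (ν : Measure α) [IsFiniteMeasure ν] (s : Set α)
    (g : α → ENNReal) (h : ∀ z, g z ≤ 1) : ∫⁻ z in s, g z ∂ν ≠ ⊤ := by
  have h1 : ∫⁻ z in s, g z ∂ν ≤ ∫⁻ _ in s, 1 ∂ν := lintegral_mono h
  rw [setLIntegral_one] at h1
  exact (h1.trans_lt (measure_lt_top ν s)).ne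

lemma splitF (F : Measure ℝ) [IsProbabilityMeasure F] {c : ℝ} (hc : 0 < c) (T x : ℝ)
    (hT : T ≤ x + c - T) :
    tailI (F.conv F) c x = (∫ y in Iic T, tailI F c (x - y) ∂F)
      + (∫ y in Ioc T (x + c - T), tailI F c (x - y) ∂F)
      + (∫ y in Ioi (x + c - T), tailI F c (x - y) ∂F) := by
  have hint : Integrable (fun y => tailI F c (x - y)) F := by
    have := intg F F hc x univ
    rwa [integrableOn_univ] at this
  have hfull : tailI (F.conv F) c x = ∫ y, tailI F c (x - y) ∂F := by
    rw [tailI, conv_Ioc F F x (x + c)]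
    rw [show (∫⁻ z, F (Ioc (x - z) (x + c - z)) ∂F) = ∫⁻ z in univ, F (Ioc (x - z) (x + c - z)) ∂F
      by rw [Measure.restrict_univ]]
    rw [lint_toReal F F hc x univ, setIntegral_univ]
  have h1 : (∫ y in Iic T, tailI F c (x - y) ∂F) + (∫ y in Ioi T, tailI F c (x - y) ∂F)
      = ∫ y, tailI F c (x - y) ∂F := by
    have := integral_add_compl (s := Iic T) measurableSet_Iic hint
    rwa [compl_Iic] at this
  have h2 : ∫ y in Ioi T, tailI F c (x - y) ∂F
      = (∫ y in Ioc T (x + c - T), tailI F c (x - y) ∂F)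
        + (∫ y in Ioi (x + c - T), tailI F c (x - y) ∂F) := by
    rw [← Ioc_union_Ioi_eq_Ioi hT]
    exact setIntegral_union (Ioc_disjoint_Ioi le_rfl) measurableSet_Ioi
      (intg F F hc x _) (intg F F hc x _)
  rw [hfull, ← h1, h2]
  ring

lemma CFge (F : Measure ℝ) [IsProbabilityMeasure F] {c : ℝ} (hc : 0 < c) (T x : ℝ) :
    (∫ y in Ioc (-T) (T - c), tailI F c (x - y) ∂F)
      ≤ ∫ y in Ioi (x + c - T), tailI F c (x - y) ∂F := by
  rw [← lint_toReal F F hc x _, ← lint_toReal F F hc x _]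
  refine ENNReal.toReal_mono (lfin _ _ _ fun z => prob_le_one) ?_
  rw [← slice2 F F x c measurableSet_Ioc]
  have hr := slice12 F F x c (s := Ioi (x + c - T)) (t := univ)
    measurableSet_Ioi MeasurableSet.univ
  simp only [inter_univ] at hr
  rw [← hr]
  apply measure_mono
  rintro p ⟨hpS, _, hp2⟩
  refine ⟨hpS, ?_, trivial⟩
  simp only [mem_Ioi]
  simp only [mem_Ioc] at hp2
  have := hpS.1
  simp only [mem_setOf_eq] at hpS
  linarith [hp2.2, hpS.1]

lemma exists_T (μ : Measure ℝ) [IsProbabilityMeasure μ] (c : ℝ) (δ : ℝ) (hδ : 0 < δ) (M : ℝ) :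
    ∃ T, M ≤ T ∧ 1 - δ ≤ (μ (Ioc (-T) (T - c))).toReal := by
  set s : ℕ → Set ℝ := fun n => Ioc (-(|M| + |c| + n)) ((|M| + |c| + n) - c) with hs
  have hmono : Monotone s := by
    intro m n hmn
    have : (m : ℝ) ≤ n := Nat.cast_le.2 hmn
    exact Ioc_subset_Ioc (by simp; linarith) (by linarith)
  have hunion : ⋃ n, s n = univ := by
    ext r
    simp only [hs, mem_iUnion, mem_univ, iff_true, mem_Ioc]
    obtain ⟨n, hn⟩ := exists_nat_gt (|r| + |c| + |M| + 1)
    refine ⟨n, ?_, ?_⟩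
    · have h1 : -|r| ≤ r := neg_abs_le r
      have := abs_nonneg M; have := abs_nonneg c
      linarith
    · have h2 : r ≤ |r| := le_abs_self r
      have h3 : c ≤ |c| := le_abs_self c
      have := abs_nonneg M
      have := abs_nonneg c
      linarith
  have htend := tendsto_measure_iUnion_atTop (μ := μ) hmono
  rw [hunion, measure_univ] at htend
  have h2 : Tendsto (fun n => (μ (s n)).toReal) atTop (𝓝 1) := by
    have := (ENNReal.tendsto_toReal (by norm_num : (1 : ENNReal) ≠ ⊤)).comp htend
    exact this
  have h3 : ∀ᶠ n : ℕ in atTop, 1 - δ ≤ (μ (s n)).toReal :=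
    h2.eventually (eventually_ge_nhds (by linarith))
  obtain ⟨n, hn⟩ := h3.exists
  refine ⟨|M| + |c| + n, ?_, ?_⟩
  · have := abs_nonneg c
    have h4 : M ≤ |M| := le_abs_self M
    have : (0:ℝ) ≤ n := Nat.cast_nonneg n
    linarith
  · exact hn

lemma midLemma (F G : Measure ℝ) [IsProbabilityMeasure F] [IsProbabilityMeasure G]
    {c : ℝ} (hc : 0 < c) {K k₂ P : ℝ} (hK : 1 ≤ K) (hk₂ : 0 < k₂)
    (had : ∀ s, P ≤ s → ∀ t, 0 ≤ t → tailI F c (s + t) ≤ K * tailI F c s)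
    (hcmp : ∀ s, P ≤ s → tailI G c s ≤ k₂ * tailI F c s)
    (N : ℕ) (x u : ℝ) (hu : P ≤ u) (hcond : P ≤ x - c - u - N * c) :
    ∫ y in Ioc u (u + N * c), tailI F c (x - y) ∂G
      ≤ K ^ 2 * k₂ * ∫ y in Ioc u (u + N * c), tailI F c (x - c - y) ∂F := by
  have hK0 : (0:ℝ) < K := lt_of_lt_of_le one_pos hK
  induction N with
  | zero => simp
  | succ n ih =>
    have hcast : ((n + 1 : ℕ) : ℝ) = (n : ℝ) + 1 := by push_cast; ring
    have hcond' : P ≤ x - c - u - ((n:ℝ) + 1) * c := by rw [hcast] at hcond; exact hcond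
    have hcn : P ≤ x - c - u - n * c := by nlinarith [hc.le]
    have ihh := ih hcn
    set v := u + (n:ℝ) * c with hv
    have hnc : (0:ℝ) ≤ (n:ℝ) * c := by positivity
    have hvP : P ≤ v := by linarith
    have hxcv : P + c ≤ x - c - v := by rw [hv]; nlinarith
    have hsplit : Ioc u (u + ((n+1 : ℕ):ℝ) * c) = Ioc u v ∪ Ioc v (v + c) := by
      rw [hcast, Ioc_union_Ioc_eq_Ioc (by linarith : u ≤ v) (by linarith : v ≤ v + c)]
      congr 1
      rw [hv]; ring
    have hdisj : Disjoint (Ioc u v) (Ioc v (v + c)) := by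
      rw [disjoint_left]
      rintro w ⟨_, hw1⟩ ⟨hw2, _⟩
      exact absurd hw1 (not_le.2 hw2)
    have cell : ∫ y in Ioc v (v + c), tailI F c (x - y) ∂G
        ≤ K ^ 2 * k₂ * ∫ y in Ioc v (v + c), tailI F c (x - c - y) ∂F := by
      set A := tailI F c (x - c - v) with hA
      have hub : ∀ y ∈ Ioc v (v + c), tailI F c (x - y) ≤ K * A := by
        intro y hy
        have h := had (x - c - v) (by linarith) (v + c - y) (by linarith [hy.2])
        simpa [show x - c - v + (v + c - y) = x - y by ring] using h
      have h1 : ∫ y in Ioc v (v + c), tailI F c (x - y) ∂G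
          ≤ ∫ _ in Ioc v (v + c), K * A ∂G :=
        setIntegral_mono_on (intg F G hc x _) (integrable_const _) measurableSet_Ioc hub
      have h2 : (∫ _ in Ioc v (v + c), K * A ∂G) = K * A * tailI G c v := by
        rw [setIntegral_const, smul_eq_mul]
        have : G.real (Ioc v (v + c)) = tailI G c v := rfl
        rw [this]; ring
      have h3 : tailI G c v ≤ k₂ * tailI F c v := hcmp v hvP
      have hlb : ∀ y ∈ Ioc v (v + c), (1 / K) * A ≤ tailI F c (x - c - y) := by
        intro y hy
        have h := had (x - c - y) (by linarith [hy.2]) (y - v) (by linarith [hy.1])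
        rw [show x - c - y + (y - v) = x - c - v by ring] at h
        rw [← hA] at h
        calc (1 / K) * A ≤ (1 / K) * (K * tailI F c (x - c - y)) := by
              apply mul_le_mul_of_nonneg_left h (by positivity)
          _ = tailI F c (x - c - y) := by field_simp
      have h4 : (1 / K) * A * tailI F c v ≤ ∫ y in Ioc v (v + c), tailI F c (x - c - y) ∂F := by
        have h5 := setIntegral_mono_on (integrable_const ((1/K) * A))
          (intg F F hc (x - c) (Ioc v (v + c))) measurableSet_Ioc hlb
        rw [setIntegral_const, smul_eq_mul] at h5
        have h6 : F.real (Ioc v (v + c)) = tailI F c v := rfl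
        rw [h6] at h5
        calc (1 / K) * A * tailI F c v = tailI F c v * ((1/K) * A) := by ring
          _ ≤ ∫ y in Ioc v (v + c), tailI F c ((x - c) - y) ∂F := h5
      have hA0 : 0 ≤ A := tailI_nonneg _ _ _
      have hfv0 : 0 ≤ tailI F c v := tailI_nonneg _ _ _
      have hgv0 : 0 ≤ tailI G c v := tailI_nonneg _ _ _
      have hI0 : (1 / K) * A * tailI F c v ≤ ∫ y in Ioc v (v + c), tailI F c (x - c - y) ∂F := h4
      calc ∫ y in Ioc v (v + c), tailI F c (x - y) ∂G ≤ K * A * tailI G c v := h1.trans_eq h2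
        _ ≤ K * A * (k₂ * tailI F c v) := by
            apply mul_le_mul_of_nonneg_left h3 (by positivity)
        _ = K * k₂ * (A * tailI F c v) := by ring
        _ ≤ K * k₂ * (K * ∫ y in Ioc v (v + c), tailI F c (x - c - y) ∂F) := by
            apply mul_le_mul_of_nonneg_left _ (by positivity)
            have := mul_le_mul_of_nonneg_left hI0 hK0.le
            calc A * tailI F c v = K * ((1/K) * A * tailI F c v) := by field_simp
              _ ≤ K * ∫ y in Ioc v (v + c), tailI F c (x - c - y) ∂F := this
        _ = K ^ 2 * k₂ * ∫ y in Ioc v (v + c), tailI F c (x - c - y) ∂F := by ring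
    rw [hsplit, setIntegral_union hdisj measurableSet_Ioc (intg F G hc x _) (intg F G hc x _),
      setIntegral_union hdisj measurableSet_Ioc (intg F F hc (x - c) _) (intg F F hc (x - c) _)]
    rw [mul_add]
    exact add_le_add ihh cell

lemma Fmid (F : Measure ℝ) [IsProbabilityMeasure F] {c : ℝ} (hc : 0 < c)
    (hFpos : ∀ᶠ x in atTop, 0 < tailI F c x)
    (hfshift : ∀ y : ℝ, Tendsto (fun x => tailI F c (x - y) / tailI F c x) atTop (𝓝 1))
    (hFS : Tendsto (fun x => tailI (F.conv F) c x / tailI F c x) atTop (𝓝 2))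
    {x₂ K : ℝ} (hK : 1 ≤ K)
    (had : ∀ s, x₂ ≤ s → ∀ t, 0 ≤ t → tailI F c (s + t) ≤ K * tailI F c s)
    (η : ℝ) (hη : 0 < η) (M : ℝ) :
    ∃ T', M ≤ T' ∧ ∀ᶠ x in atTop,
      ∫ y in Ioc T' (x + c - T'), tailI F c (x - y) ∂F ≤ η * tailI F c x := by
  set δ := η / 5 with hδdef
  have hδ : 0 < δ := by rw [hδdef]; linarith
  obtain ⟨T', hT'M, hT'meas⟩ := exists_T F c δ hδ M
  set FT1 := (F (Ioc (-T') T')).toReal with hFT1def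
  set FT2 := (F (Ioc (-T') (T' - c))).toReal with hFT2def
  have hFT2 : 1 - δ ≤ FT2 := hT'meas
  have hFT1 : 1 - δ ≤ FT2 → 1 - δ ≤ FT1 := by
    intro h
    refine le_trans h (ENNReal.toReal_mono (measure_ne_top _ _)
      (measure_mono (Ioc_subset_Ioc_right (by linarith))))
  have hFT1' : 1 - δ ≤ FT1 := hFT1 hFT2
  have hdct1 := lem_dct F (tailI F c) (tailI_measurable F hc.le) (tailI_nonneg F c)
    hfshift x₂ K hK had (-T') T'
  have hdct2 := lem_dct F (tailI F c) (tailI_measurable F hc.le) (tailI_nonneg F c)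
    hfshift x₂ K hK had (-T') (T' - c)
  have hev1 : ∀ᶠ x in atTop,
      |(∫ y in Ioc (-T') T', tailI F c (x - y) ∂F) / tailI F c x - FT1| < δ := by
    have := Metric.tendsto_nhds.1 hdct1 δ hδ
    simpa [Real.dist_eq] using this
  have hev2 : ∀ᶠ x in atTop,
      |(∫ y in Ioc (-T') (T' - c), tailI F c (x - y) ∂F) / tailI F c x - FT2| < δ := by
    have := Metric.tendsto_nhds.1 hdct2 δ hδ
    simpa [Real.dist_eq] using this
  have hevS : ∀ᶠ x in atTop, |tailI (F.conv F) c x / tailI F c x - 2| < δ := by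
    have := Metric.tendsto_nhds.1 hFS δ hδ
    simpa [Real.dist_eq] using this
  refine ⟨T', hT'M, ?_⟩
  filter_upwards [hFpos, hev1, hev2, hevS, eventually_ge_atTop (2 * T')] with x hfx h1 h2 hS hx
  set fx := tailI F c x with hfxdef
  have hsplit := splitF F hc T' x (by linarith)
  set AA := ∫ y in Iic T', tailI F c (x - y) ∂F with hAA
  set MM := ∫ y in Ioc T' (x + c - T'), tailI F c (x - y) ∂F with hMM
  set CC := ∫ y in Ioi (x + c - T'), tailI F c (x - y) ∂F with hCC
  have hAlb : (FT1 - δ) * fx ≤ AA := by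
    have hr : FT1 - δ ≤ (∫ y in Ioc (-T') T', tailI F c (x - y) ∂F) / fx := by
      have := abs_lt.1 h1
      linarith [this.1]
    have h3 : (FT1 - δ) * fx ≤ ∫ y in Ioc (-T') T', tailI F c (x - y) ∂F :=
      (le_div_iff₀ hfx).1 hr
    refine le_trans h3 ?_
    refine setIntegral_mono_set (intg F F hc x _) ?_ ?_
    · exact ae_of_all _ fun y => tailI_nonneg _ _ _
    · exact HasSubset.Subset.eventuallyLE fun y hy => hy.2
  have hClb : (FT2 - δ) * fx ≤ CC := by
    have hr : FT2 - δ ≤ (∫ y in Ioc (-T') (T' - c), tailI F c (x - y) ∂F) / fx := by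
      have := abs_lt.1 h2
      linarith [this.1]
    have h3 : (FT2 - δ) * fx ≤ ∫ y in Ioc (-T') (T' - c), tailI F c (x - y) ∂F :=
      (le_div_iff₀ hfx).1 hr
    exact le_trans h3 (CFge F hc T' x)
  have hFFub : tailI (F.conv F) c x ≤ (2 + δ) * fx := by
    have := (abs_lt.1 hS).2
    have h4 : tailI (F.conv F) c x / fx ≤ 2 + δ := by linarith
    calc tailI (F.conv F) c x = (tailI (F.conv F) c x / fx) * fx := by field_simp
      _ ≤ (2 + δ) * fx := mul_le_mul_of_nonneg_right h4 hfx.le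
  have hMub : MM ≤ 5 * δ * fx := by
    have : MM = tailI (F.conv F) c x - AA - CC := by rw [hsplit]; ring
    rw [this]
    nlinarith [hfx.le]
  calc MM ≤ 5 * δ * fx := hMub
    _ = η * fx := by rw [hδdef]; ring

set_option maxHeartbeats 1000000 in
theorem asymp_equiv_sdelta (F G : Measure ℝ) [IsProbabilityMeasure F] [IsProbabilityMeasure G]
    (c : ℝ) (hc : 0 < c) (hF : SDelta F c) (hFD : DDelta F c) (hG : LongDelta G c)
    (k₁ k₂ : ℝ) (hk₁ : 0 < k₁) (hk₂ : 0 < k₂)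
    (hcomp : ∀ᶠ x in atTop, k₁ * tailI F c x ≤ tailI G c x ∧ tailI G c x ≤ k₂ * tailI F c x) :
    SDelta G c := by
  obtain ⟨hFL, hFS⟩ := hF
  obtain ⟨hGpos, hGlong⟩ := hG
  refine ⟨⟨hGpos, hGlong⟩, ?_⟩
  have hfshift := lem_shift (tailI F c) hFL.1 hFL.2
  have hgshift := lem_shift (tailI G c) hGpos hGlong
  obtain ⟨x₀, hx₀pos, K₀, hK₀pos, hadF₀⟩ := hFD
  obtain ⟨X, hX⟩ := eventually_atTop.1 hcomp
  set K := max K₀ 1 with hKdef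
  have hK1 : 1 ≤ K := le_max_right _ _
  have hK0 : 0 < K := lt_of_lt_of_le one_pos hK1
  set P := max (x₀ + 1) X with hPdef
  have hP1 : 1 ≤ P := le_trans (by linarith) (le_max_left _ _)
  have hadF : ∀ s, P ≤ s → ∀ t, 0 ≤ t → tailI F c (s + t) ≤ K * tailI F c s := by
    intro s hs t ht
    rcases eq_or_lt_of_le ht with h | h
    · rw [← h, add_zero]
      exact le_mul_of_one_le_left (tailI_nonneg _ _ _) hK1
    · have h2 := hadF₀ s (by have := le_max_left (x₀ + 1) X; linarith [hs]) t h
      exact h2.trans (mul_le_mul_of_nonneg_right (le_max_left _ _) (tailI_nonneg _ _ _))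
  have hcmp2 : ∀ s, P ≤ s → k₁ * tailI F c s ≤ tailI G c s ∧ tailI G c s ≤ k₂ * tailI F c s :=
    fun s hs => hX s (le_trans (le_max_right _ _) hs)
  set K' := max (k₂ * K / k₁) 1 with hK'def
  have hK'1 : 1 ≤ K' := le_max_right _ _
  have hadG : ∀ s, P ≤ s → ∀ t, 0 ≤ t → tailI G c (s + t) ≤ K' * tailI G c s := by
    intro s hs t ht
    have h1 : tailI G c (s + t) ≤ k₂ * tailI F c (s + t) := (hcmp2 (s + t) (by linarith)).2
    have h2 : tailI F c (s + t) ≤ K * tailI F c s := hadF s hs t ht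
    have h3 : k₁ * tailI F c s ≤ tailI G c s := (hcmp2 s hs).1
    have h4 : tailI G c (s + t) ≤ k₂ * K * tailI F c s := by nlinarith [tailI_nonneg F c (s + t)]
    have h5 : k₂ * K * tailI F c s ≤ (k₂ * K / k₁) * tailI G c s := by
      rw [div_mul_eq_mul_div, le_div_iff₀ hk₁]
      nlinarith [mul_le_mul_of_nonneg_left h3 (mul_nonneg hk₂.le hK0.le)]
    have h6 : (k₂ * K / k₁) * tailI G c s ≤ K' * tailI G c s :=
      mul_le_mul_of_nonneg_right (le_max_left _ _) (tailI_nonneg _ _ _)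
    linarith
  rw [Metric.tendsto_nhds]
  intro ε hε
  set δ := ε / (8 * (1 + K')) with hδdef
  have hδ : 0 < δ := by
    rw [hδdef]; apply div_pos hε; nlinarith
  set η := ε * k₁ / (8 * K ^ 2 * k₂ ^ 2) with hηdef
  have hη : 0 < η := by
    rw [hηdef]; apply div_pos (mul_pos hε hk₁); positivity
  obtain ⟨T', hT'P, hT'mid⟩ := Fmid F hc hFL.1 hfshift hFS hK1 hadF η hη (P + 1)
  obtain ⟨T, hTlb, hTmeas⟩ := exists_T G c δ hδ (max (T' + 3 * c) (P + 3 * c + 1))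
  have hTT' : T' + 3 * c ≤ T := le_trans (le_max_left _ _) hTlb
  have hTP : P + 3 * c + 1 ≤ T := le_trans (le_max_right _ _) hTlb
  have hT0 : 0 < T := by linarith
  have hGT2 : 1 - δ ≤ (G (Ioc (-T) (T - c))).toReal := hTmeas
  have hGT : 1 - δ ≤ (G (Ioc (-T) T)).toReal :=
    le_trans hGT2 (ENNReal.toReal_mono (measure_ne_top _ _)
      (measure_mono (Ioc_subset_Ioc_right (by linarith))))
  have hGTle1 : (G (Ioc (-T) T)).toReal ≤ 1 := by
    have h : G (Ioc (-T) T) ≤ 1 := prob_le_one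
    calc (G (Ioc (-T) T)).toReal ≤ (1 : ENNReal).toReal := ENNReal.toReal_mono ENNReal.one_ne_top h
      _ = 1 := by simp
  have hGiT : (G (Iic (-T))).toReal ≤ δ := by
    have hd : Disjoint (Iic (-T)) (Ioc (-T) (T - c)) := Iic_disjoint_Ioc le_rfl
    have hu := measure_union (μ := G) hd measurableSet_Ioc
    have h1 : G (Iic (-T) ∪ Ioc (-T) (T - c)) ≤ 1 := prob_le_one
    rw [hu] at h1
    have h2 : (G (Iic (-T))).toReal + (G (Ioc (-T) (T - c))).toReal ≤ 1 := by
      rw [← ENNReal.toReal_add (measure_ne_top _ _) (measure_ne_top _ _)]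
      calc _ ≤ (1 : ENNReal).toReal := ENNReal.toReal_mono ENNReal.one_ne_top h1
        _ = 1 := by simp
    linarith
  have hdctG := lem_dct G (tailI G c) (tailI_measurable G hc.le) (tailI_nonneg G c)
    hgshift P K' hK'1 hadG (-T) T
  have hevG : ∀ᶠ x in atTop,
      |(∫ y in Ioc (-T) T, tailI G c (x - y) ∂G) / tailI G c x - (G (Ioc (-T) T)).toReal| < δ := by
    have h := Metric.tendsto_nhds.1 hdctG δ hδ
    simpa [Real.dist_eq] using h
  have hmidshift : ∀ᶠ x in atTop,
      ∫ y in Ioc T' (x - c + c - T'), tailI F c (x - c - y) ∂F ≤ η * tailI F c (x - c) := by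
    have hmap : Tendsto (fun x : ℝ => x - c) atTop atTop := by
      simpa [sub_eq_add_neg] using tendsto_atTop_add_const_right atTop (-c) tendsto_id
    exact hmap.eventually hT'mid
  have hfc : ∀ᶠ x in atTop, tailI F c (x - c) ≤ 2 * tailI F c x := by
    have h := hfshift c
    have h2 : ∀ᶠ x in atTop, tailI F c (x - c) / tailI F c x ≤ 2 :=
      h.eventually (eventually_le_nhds (by norm_num))
    filter_upwards [h2, hFL.1] with x hx hfx
    calc tailI F c (x - c) = tailI F c (x - c) / tailI F c x * tailI F c x := by
          field_simp
      _ ≤ 2 * tailI F c x := mul_le_mul_of_nonneg_right hx hfx.le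
  filter_upwards [hGpos, hFL.1, hevG, hmidshift, hfc,
    eventually_ge_atTop (2 * T + 2 * c + 2 * P + 2), hcomp] with x hgx hfx hG1 hmidx hfcx hxl hcmpx
  have hPx : P ≤ x := by linarith
  have hdec := decompG G hc T x (by linarith)
  have hMb := Mbound G hc T x
  -- A bounds
  have hAsplit : (∫ y in Iic T, tailI G c (x - y) ∂G)
      = (∫ y in Iic (-T), tailI G c (x - y) ∂G) + ∫ y in Ioc (-T) T, tailI G c (x - y) ∂G := by
    rw [← setIntegral_union (Iic_disjoint_Ioc le_rfl) measurableSet_Ioc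
      (intg G G hc x _) (intg G G hc x _), Iic_union_Ioc_eq_Iic (by linarith : -T ≤ T)]
  have htail : (∫ y in Iic (-T), tailI G c (x - y) ∂G) ≤ K' * tailI G c x * δ := by
    have hpt : ∀ y ∈ Iic (-T), tailI G c (x - y) ≤ K' * tailI G c x := by
      intro y hy
      simp only [mem_Iic] at hy
      have h := hadG x hPx (-y) (by linarith)
      rw [show x + -y = x - y by ring] at h
      exact h
    have h1 : (∫ y in Iic (-T), tailI G c (x - y) ∂G) ≤ ∫ _ in Iic (-T), K' * tailI G c x ∂G :=
      setIntegral_mono_on (intg G G hc x _) (integrable_const _) measurableSet_Iic hpt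
    rw [setIntegral_const, smul_eq_mul] at h1
    have hKg : 0 ≤ K' * tailI G c x := by positivity
    calc (∫ y in Iic (-T), tailI G c (x - y) ∂G) ≤ (G (Iic (-T))).toReal * (K' * tailI G c x) := h1
      _ ≤ δ * (K' * tailI G c x) := mul_le_mul_of_nonneg_right hGiT hKg
      _ = K' * tailI G c x * δ := by ring
  have hIlb : ((G (Ioc (-T) T)).toReal - δ) * tailI G c x
      ≤ ∫ y in Ioc (-T) T, tailI G c (x - y) ∂G := by
    have h2 := (abs_lt.1 hG1).1
    exact (le_div_iff₀ hgx).1 (by linarith)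
  have hIub : (∫ y in Ioc (-T) T, tailI G c (x - y) ∂G)
      ≤ ((G (Ioc (-T) T)).toReal + δ) * tailI G c x := by
    have h2 := (abs_lt.1 hG1).2
    have h3 : (∫ y in Ioc (-T) T, tailI G c (x - y) ∂G) / tailI G c x
        ≤ (G (Ioc (-T) T)).toReal + δ := by linarith
    calc (∫ y in Ioc (-T) T, tailI G c (x - y) ∂G)
        = (∫ y in Ioc (-T) T, tailI G c (x - y) ∂G) / tailI G c x * tailI G c x := by
          field_simp
      _ ≤ ((G (Ioc (-T) T)).toReal + δ) * tailI G c x :=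
          mul_le_mul_of_nonneg_right h3 hgx.le
  -- middle bound
  have hMx : ((G.prod G) ({p : ℝ × ℝ | x < p.1 + p.2 ∧ p.1 + p.2 ≤ x + c}
      ∩ Ioi T ×ˢ Ioi T)).toReal ≤ ε / 4 * tailI G c x := by
    have hstep1 : (∫ y in Ioc T (x + c - T), tailI G c (x - y) ∂G)
        ≤ ∫ y in Ioc T (x + c - T), k₂ * tailI F c (x - y) ∂G := by
      refine setIntegral_mono_on (intg G G hc x _) ((intg F G hc x _).const_mul k₂)
        measurableSet_Ioc fun y hy => ?_
      simp only [mem_Ioc] at hy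
      exact (hcmp2 (x - y) (by linarith [hy.2])).2
    rw [integral_const_mul] at hstep1
    set N := Nat.ceil ((x + c - 2 * T) / c) with hNdef
    have hN1 : x + c - T ≤ T + (N : ℝ) * c := by
      have h := Nat.le_ceil ((x + c - 2 * T) / c)
      rw [div_le_iff₀ hc] at h
      linarith
    have hN2 : (N : ℝ) * c < x + 2 * c - 2 * T := by
      have h0 : 0 ≤ (x + c - 2 * T) / c := by
        apply div_nonneg _ hc.le; linarith
      have h := Nat.ceil_lt_add_one h0
      calc (N : ℝ) * c < ((x + c - 2 * T) / c + 1) * c :=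
            mul_lt_mul_of_pos_right h hc
        _ = x + 2 * c - 2 * T := by field_simp; ring
    have hsub1 : (∫ y in Ioc T (x + c - T), tailI F c (x - y) ∂G)
        ≤ ∫ y in Ioc T (T + (N : ℝ) * c), tailI F c (x - y) ∂G :=
      setIntegral_mono_set (intg F G hc x _) (ae_of_all _ fun y => tailI_nonneg _ _ _)
        (HasSubset.Subset.eventuallyLE (Ioc_subset_Ioc_right hN1))
    have hmidL := midLemma F G hc hK1 hk₂ hadF (fun s hs => (hcmp2 s hs).2) N x T
      (by linarith) (by linarith)
    have hsub2 : (∫ y in Ioc T (T + (N : ℝ) * c), tailI F c (x - c - y) ∂F)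
        ≤ ∫ y in Ioc T' (x - c + c - T'), tailI F c (x - c - y) ∂F := by
      refine setIntegral_mono_set (intg F F hc (x - c) _)
        (ae_of_all _ fun y => tailI_nonneg _ _ _)
        (HasSubset.Subset.eventuallyLE (Ioc_subset_Ioc (by linarith) (by linarith)))
    have hfin1 : k₂ * K ^ 2 * k₂ * (η * tailI F c (x - c)) ≤ ε / 4 * tailI G c x := by
      have hgfx : k₁ * tailI F c x ≤ tailI G c x := hcmpx.1
      have hchain : k₂ * K ^ 2 * k₂ * (η * tailI F c (x - c))
          ≤ k₂ * K ^ 2 * k₂ * (η * (2 * tailI F c x)) := by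
        apply mul_le_mul_of_nonneg_left _ (by positivity)
        exact mul_le_mul_of_nonneg_left hfcx hη.le
      refine hchain.trans ?_
      have hval : k₂ * K ^ 2 * k₂ * (η * 2) = ε / 4 * k₁ := by
        rw [hηdef]; field_simp; ring
      have : k₂ * K ^ 2 * k₂ * (η * (2 * tailI F c x)) = ε / 4 * (k₁ * tailI F c x) := by
        calc k₂ * K ^ 2 * k₂ * (η * (2 * tailI F c x))
            = (k₂ * K ^ 2 * k₂ * (η * 2)) * tailI F c x := by ring
          _ = (ε / 4 * k₁) * tailI F c x := by rw [hval]
          _ = ε / 4 * (k₁ * tailI F c x) := by ring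
      rw [this]
      exact mul_le_mul_of_nonneg_left hgfx (by positivity)
    calc ((G.prod G) ({p : ℝ × ℝ | x < p.1 + p.2 ∧ p.1 + p.2 ≤ x + c}
          ∩ Ioi T ×ˢ Ioi T)).toReal
        ≤ ∫ y in Ioc T (x + c - T), tailI G c (x - y) ∂G := hMb
      _ ≤ k₂ * ∫ y in Ioc T (x + c - T), tailI F c (x - y) ∂G := hstep1
      _ ≤ k₂ * ∫ y in Ioc T (T + (N : ℝ) * c), tailI F c (x - y) ∂G :=
          mul_le_mul_of_nonneg_left hsub1 hk₂.le
      _ ≤ k₂ * (K ^ 2 * k₂ * ∫ y in Ioc T (T + (N : ℝ) * c), tailI F c (x - c - y) ∂F) :=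
          mul_le_mul_of_nonneg_left hmidL hk₂.le
      _ ≤ k₂ * (K ^ 2 * k₂ * ∫ y in Ioc T' (x - c + c - T'), tailI F c (x - c - y) ∂F) := by
          apply mul_le_mul_of_nonneg_left _ hk₂.le
          exact mul_le_mul_of_nonneg_left hsub2 (by positivity)
      _ ≤ k₂ * (K ^ 2 * k₂ * (η * tailI F c (x - c))) := by
          apply mul_le_mul_of_nonneg_left _ hk₂.le
          exact mul_le_mul_of_nonneg_left hmidx (by positivity)
      _ = k₂ * K ^ 2 * k₂ * (η * tailI F c (x - c)) := by ring
      _ ≤ ε / 4 * tailI G c x := hfin1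
  -- assembly
  have h1K : (0:ℝ) < 1 + K' := by nlinarith
  have hδval : δ * (1 + K') = ε / 8 := by
    rw [hδdef]; field_simp
  have hδsmall : δ ≤ ε / 16 := by
    nlinarith [hδval, hK'1, hδ.le]
  have hub : tailI (G.conv G) c x ≤ (2 + ε / 2) * tailI G c x := by
    rw [hdec]
    have hA : (∫ y in Iic T, tailI G c (x - y) ∂G) ≤ (1 + δ + K' * δ) * tailI G c x := by
      rw [hAsplit]
      nlinarith [htail, hIub, hGTle1, hgx.le, hδ]
    have hexp : 2 * ((1 + δ + K' * δ) * tailI G c x) + ε / 4 * tailI G c x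
        = (2 + ε / 2) * tailI G c x := by
      have h9 : δ + K' * δ = ε / 8 := by rw [← hδval]; ring
      rw [show 2 * ((1 + δ + K' * δ) * tailI G c x) + ε / 4 * tailI G c x
        = (2 + 2 * (δ + K' * δ) + ε / 4) * tailI G c x by ring, h9]
      ring
    linarith [hMx, hA]
  have hlb : (2 - ε / 2) * tailI G c x ≤ tailI (G.conv G) c x := by
    rw [hdec]
    have h1 : 0 ≤ ∫ y in Iic (-T), tailI G c (x - y) ∂G :=
      setIntegral_nonneg measurableSet_Iic fun y _ => tailI_nonneg _ _ _
    have hA : (1 - 2 * δ) * tailI G c x ≤ ∫ y in Iic T, tailI G c (x - y) ∂G := by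
      rw [hAsplit]
      nlinarith [hIlb, hGT, hgx.le, hδ]
    have hM0 : (0:ℝ) ≤ ((G.prod G) ({p : ℝ × ℝ | x < p.1 + p.2 ∧ p.1 + p.2 ≤ x + c}
        ∩ Ioi T ×ˢ Ioi T)).toReal := ENNReal.toReal_nonneg
    nlinarith [hgx.le]
  rw [Real.dist_eq]
  have hfin : |tailI (G.conv G) c x / tailI G c x - 2| ≤ ε / 2 := by
    rw [abs_le]
    constructor
    · have := (le_div_iff₀ hgx).2 hlb
      linarith
    · have := (div_le_iff₀ hgx).2 hub
      linarith
  linarith
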